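/- Assume u₀ and u₁ are smooth vector fields on T² such that the pair (u₀,u₁) satisfies Condition B. Then for every C¹ function h : T² → ℝ, all x ∈ T², all (s,t) ∈ [0,∞)², and all ξ ∈ ℝ²: D_x(h(Ψ^{(s,t)}(x))) ξ = D_{(s,t)}(h(Ψ^{(s,t)}(x))) τ_t(x) ξ, where τ_t(x) = -U(Ψ_0^t(x))^{-1} F_0^t(x). -/

import Mathlib

open MeasureTheory Set
noncomputable section

abbrev R2 : Type := EuclideanSpace ℝ (Fin 2)

/-- The lift of an integer vector `m ∈ ℤ²` to `ℝ²`. -/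
def intVec (m : Fin 2 → ℤ) : R2 := WithLp.toLp 2 (fun i => (m i : ℝ))

/-- A fundamental domain `[0,1)²` for the torus `T² = ℝ²/ℤ²`. -/
def Fund : Set R2 := {x | ∀ i, x i ∈ Set.Ico (0 : ℝ) 1}

/-- A function on `ℝ²` descends to the torus iff it is `ℤ²`-periodic. -/
def PeriodicR2 {α : Type*} (f : R2 → α) : Prop :=
  ∀ (m : Fin 2 → ℤ) (x : R2), f (x + intVec m) = f x

/-- `Φ` is the flow of the vector field `u` on the torus (lifted to `ℝ²`). -/
def IsFlowOf (u : R2 → R2) (Φ : ℝ → R2 → R2) : Prop :=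
  (∀ x, Φ 0 x = x) ∧
  (∀ (x : R2) (t : ℝ), HasDerivAt (fun s => Φ s x) (u (Φ t x)) t) ∧
  (∀ (s t : ℝ) (x : R2), Φ (s + t) x = Φ s (Φ t x)) ∧
  (∀ (t : ℝ) (m : Fin 2 → ℤ) (x : R2), Φ t (x + intVec m) = Φ t x + intVec m)

/-- Jacobian determinant of a map `ℝ² → ℝ²`. -/
def jacDet (f : R2 → R2) (x : R2) : ℝ := LinearMap.det (fderiv ℝ f x : R2 →ₗ[ℝ] R2)

/-- A smooth, `ℤ²`-periodic vector field (i.e. a smooth vector field on `T²`). -/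
def SmoothVF (u : R2 → R2) : Prop := ContDiff ℝ (⊤ : ℕ∞) u ∧ PeriodicR2 u

/-- Condition A: the flow has an invariant measure with everywhere positive smooth
density w.r.t. Lebesgue measure, and no fixed points or periodic orbits on the torus. -/
def CondA (u : R2 → R2) (Φ : ℝ → R2 → R2) : Prop :=
  (∃ ρ : R2 → ℝ, ContDiff ℝ (⊤ : ℕ∞) ρ ∧ PeriodicR2 ρ ∧ (∀ x, 0 < ρ x) ∧
      ∀ (t : ℝ) (x : R2), ρ (Φ t x) * |jacDet (Φ t) x| = ρ x) ∧
  (∀ x, u x ≠ 0) ∧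
  (∀ (x : R2) (t : ℝ), 0 < t → ∀ m : Fin 2 → ℤ, Φ t x ≠ x + intVec m)

/-- Condition B: at every point, `u₀(x)` and `u₁(x)` span `ℝ²`. -/
def CondB (u₀ u₁ : R2 → R2) : Prop :=
  ∀ x : R2, Submodule.span ℝ {u₀ x, u₁ x} = ⊤

/-- The matrix `U(x)` with columns `u₁(x)` and `u₀(x)`. -/
def Umat (u₀ u₁ : R2 → R2) (x : R2) : Matrix (Fin 2) (Fin 2) ℝ :=
  Matrix.of fun i j => if j = 0 then u₁ x i else u₀ x i

/-- The backward flow `Ψ^t = Φ^{-t}`. -/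
def Psi (Φ : ℝ → R2 → R2) (t : ℝ) (x : R2) : R2 := Φ (-t) x

/-- `Ψ^{(s,t)} = Ψ₁^s ∘ Ψ₀^t`. -/
def Psi2 (Φ₀ Φ₁ : ℝ → R2 → R2) (s t : ℝ) (x : R2) : R2 := Psi Φ₁ s (Psi Φ₀ t x)

/-- `F^t(x) = D_x Ψ^t(x)`. -/
def Fmat (Φ : ℝ → R2 → R2) (t : ℝ) (x : R2) : R2 →L[ℝ] R2 := fderiv ℝ (Psi Φ t) x

/-- `J_{(s,t)}(x) = det (F₁^s(Ψ₀^t x) F₀^t(x))`. -/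
def Jst (Φ₀ Φ₁ : ℝ → R2 → R2) (s t : ℝ) (x : R2) : ℝ :=
  LinearMap.det (((Fmat Φ₁ s (Psi Φ₀ t x)).comp (Fmat Φ₀ t x)) : R2 →ₗ[ℝ] R2)

/-- The transfer operator `Q`. -/
def Qop (Φ₀ Φ₁ : ℝ → R2 → R2) (lam : ℝ) (h : R2 → ℝ) (x : R2) : ℝ :=
  ∫ s in Set.Ioi (0 : ℝ), ∫ t in Set.Ioi (0 : ℝ),
    lam ^ 2 * Real.exp (-lam * (s + t)) * Jst Φ₀ Φ₁ s t x * h (Psi2 Φ₀ Φ₁ s t x)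

/-- Expectation `E[f(S,T)]` for `S, T` i.i.d. `Exponential(lam)`. -/
def expE (lam : ℝ) (f : ℝ → ℝ → ℝ) : ℝ :=
  ∫ s in Set.Ioi (0 : ℝ), ∫ t in Set.Ioi (0 : ℝ),
    lam ^ 2 * Real.exp (-lam * (s + t)) * f s t

/-- The projections `π₀(s,t) = (s,t)`, `π₁(s,t) = (s,0)`, `π₂(s,t) = (0,t)`. -/
def pimap : Fin 3 → ℝ × ℝ → ℝ × ℝ := ![id, fun p => (p.1, 0), fun p => (0, p.2)]

def uncurry3 (G : R2 → ℝ → ℝ → ℝ) : R2 × ℝ × ℝ → ℝ := fun p => G p.1 p.2.1 p.2.2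

/-- The class `𝒢` of good functions: smooth functions `G(x,s,t)` such that `G` and all of
its partial derivatives are bounded on `T² × [0,∞)²` by polynomials in `(s,t)`,
uniformly in `x`. -/
def GoodClass (G : R2 → ℝ → ℝ → ℝ) : Prop :=
  ContDiff ℝ (⊤ : ℕ∞) (uncurry3 G) ∧
  ∀ n : ℕ, ∃ q : MvPolynomial (Fin 2) ℝ, ∀ x ∈ Fund, ∀ s t : ℝ, 0 ≤ s → 0 ≤ t →
    ‖iteratedFDeriv ℝ n (uncurry3 G) (x, s, t)‖ ≤ MvPolynomial.eval ![s, t] q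

/-- The matrix `τ_t(x) = -U(Ψ₀^t x)⁻¹ F₀^t(x)`. -/
def tauM (u₀ u₁ : R2 → R2) (Φ₀ : ℝ → R2 → R2) (t : ℝ) (x : R2) : Matrix (Fin 2) (Fin 2) ℝ :=
  -((Umat u₀ u₁ (Psi Φ₀ t x))⁻¹ *
      Matrix.of fun k l => Fmat Φ₀ t x (EuclideanSpace.single l 1) k)

/-- `τ_t(x) ξ`, viewed as a direction in the `(s,t)`-plane. -/
def tauVec (u₀ u₁ : R2 → R2) (Φ₀ : ℝ → R2 → R2) (t : ℝ) (x : R2) (ξ : R2) : ℝ × ℝ :=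
  ((tauM u₀ u₁ Φ₀ t x).mulVec (fun i => ξ i) 0, (tauM u₀ u₁ Φ₀ t x).mulVec (fun i => ξ i) 1)

/-- `‖∇ⁿ_x f‖_{L¹(T²)}`. -/
def gradL1 (n : ℕ) (f : R2 → ℝ) : ℝ := ∫ x in Fund, ‖iteratedFDeriv ℝ n f x‖

/-- `max{‖f‖_{L¹}, ‖∇f‖_{L¹}, …, ‖∇ⁿf‖_{L¹}}`. -/
def maxDer (n : ℕ) (f : R2 → ℝ) : ℝ :=
  (Finset.range (n + 1)).sup' ⟨0, Finset.mem_range.mpr n.succ_pos⟩ fun j => gradL1 j f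

/-- Partial-derivative operator `∂ᵢ` for scalar functions. -/
def pdS (i : Fin 2) (f : R2 → ℝ) : R2 → ℝ := fun x => fderiv ℝ f x (EuclideanSpace.single i 1)

/-- Partial-derivative operator `∂ᵢ` for `ℝ²`-valued functions. -/
def pdV (i : Fin 2) (f : R2 → R2) : R2 → R2 := fun x => fderiv ℝ f x (EuclideanSpace.single i 1)

/-- Invariant density pair for the switching process with rate `lam`, characterized by
stationarity against the generator `L f(x,i) = u_i(x)·∇f_i(x) + λ (f_{1-i}(x) - f_i(x))`. -/
def IsInvariantDensityPair (u₀ u₁ : R2 → R2) (lam : ℝ) (ρ₀ ρ₁ : R2 → ℝ) : Prop :=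
  PeriodicR2 ρ₀ ∧ PeriodicR2 ρ₁ ∧ (∀ x, 0 ≤ ρ₀ x) ∧ (∀ x, 0 ≤ ρ₁ x) ∧
  MeasureTheory.IntegrableOn ρ₀ Fund ∧ MeasureTheory.IntegrableOn ρ₁ Fund ∧
  (∫ x in Fund, ρ₀ x) + (∫ x in Fund, ρ₁ x) = 1 ∧
  ∀ f₀ f₁ : R2 → ℝ, ContDiff ℝ (⊤ : ℕ∞) f₀ → ContDiff ℝ (⊤ : ℕ∞) f₁ →
    PeriodicR2 f₀ → PeriodicR2 f₁ →
    (∫ x in Fund, (fderiv ℝ f₀ x (u₀ x) + lam * (f₁ x - f₀ x)) * ρ₀ x) +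
      (∫ x in Fund, (fderiv ℝ f₁ x (u₁ x) + lam * (f₀ x - f₁ x)) * ρ₁ x) = 0

/-!
Both sides are chain-rule expansions through `Ψ^{(s,t)} = Φ₁^{-s} ∘ Φ₀^{-t}`. With
`z = Ψ₀^t x` and `G = D_z Φ₁^{-s}`, the spatial derivative is `ξ ↦ G (F₀^t(x) ξ)`, while the
temporal one is `(a, b) ↦ -G (a u₁(z) + b u₀(z))`, because the differential of a flow transports
its own vector field: `D_z Φ^t (u z) = u (Φ^t z)`. Condition B makes `U(z)` invertible, and
`τ_t(x) ξ` is precisely the coefficient vector `(a, b)` with `a u₁(z) + b u₀(z) = -F₀^t(x) ξ`.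

The analytic input is differentiability of the flow, in space and jointly in `(t, x)`. For short
times, Grönwall's inequality applied to `Φ^t y - Φ^t x - Q(t) (y - x)`, where `Q` solves the
variational equation `Q' = Du(Φ^t x) Q, Q(0) = id`, bounds this remainder by `O(‖y - x‖²)`; a
long time `t` is an iterate of the short time `t / n`.
-/

open Filter Topology Asymptotics
open scoped NNReal

theorem gronwallBound_zero_mul (K ε c x : ℝ) :
    gronwallBound 0 K (c * ε) x = c * gronwallBound 0 K ε x := by
  unfold gronwallBound; split_ifs <;> ring

section

variable {E : Type*} [NormedAddCommGroup E] [NormedSpace ℝ E]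

theorem norm_sub_sub_fderiv_le_of_lipschitzWith {F : Type*} [NormedAddCommGroup F]
    [NormedSpace ℝ F] {f : E → F} {C : ℝ≥0} (hf : Differentiable ℝ f)
    (hf' : LipschitzWith C (fderiv ℝ f)) (a b : E) :
    ‖f b - f a - fderiv ℝ f a (b - a)‖ ≤ C * ‖b - a‖ ^ 2 := by
  have hbound : ∀ z ∈ Metric.closedBall a ‖b - a‖, ‖fderiv ℝ f z - fderiv ℝ f a‖ ≤ C * ‖b - a‖ :=
    fun z hz => by
      rw [← dist_eq_norm]
      exact (hf'.dist_le_mul z a).trans (by gcongr; exact hz)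
  have := (convex_closedBall a ‖b - a‖).norm_image_sub_le_of_norm_fderiv_le' (fun z _ => hf z)
    hbound (Metric.mem_closedBall_self (norm_nonneg _))
    (by rw [Metric.mem_closedBall, dist_eq_norm])
  rw [sq, ← mul_assoc]
  exact this

theorem hasFDerivAt_of_norm_sub_sub_le_sq {F : Type*} [NormedAddCommGroup F] [NormedSpace ℝ F]
    {f : E → F} {L : E →L[ℝ] F} {x : E} (B : ℝ)
    (hf : ∀ y, ‖f y - f x - L (y - x)‖ ≤ B * ‖y - x‖ ^ 2) : HasFDerivAt f L x :=
  .of_isLittleO <| (IsBigO.of_bound B (Eventually.of_forall fun y => by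
    simpa [abs_of_nonneg (sq_nonneg ‖y - x‖)] using hf y)).trans_isLittleO
      (isLittleO_pow_sub_sub x one_lt_two)

/-- Only short-time existence is claimed: Picard–Lindelöf is applied on the unit ball around the
identity, on which `Q ↦ A t ∘ Q` is bounded by `2 * K`. -/
theorem exists_hasDerivWithinAt_clm_comp [CompleteSpace E] {A : ℝ → E →L[ℝ] E} {K : ℝ≥0}
    {T : ℝ} (hT : 0 ≤ T) (hKT : 2 * K * T ≤ 1) (hA : ContinuousOn A (Icc 0 T))
    (hAK : ∀ t ∈ Icc 0 T, ‖A t‖ ≤ K) :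
    ∃ Q : ℝ → E →L[ℝ] E, Q 0 = ContinuousLinearMap.id ℝ E ∧
      ∀ t ∈ Icc 0 T, HasDerivWithinAt Q ((A t).comp (Q t)) (Icc 0 T) t := by
  have hPL : IsPicardLindelof (fun t Q => (A t).comp Q) (tmin := 0) (tmax := T)
      ⟨0, left_mem_Icc.2 hT⟩ (ContinuousLinearMap.id ℝ E) 1 0 (2 * K) K := by
    refine ⟨fun t ht => LipschitzWith.lipschitzOnWith (LipschitzWith.of_dist_le_mul fun P Q => ?_),
      fun Q _ => hA.clm_comp continuousOn_const, fun t ht Q hQ => ?_, ?_⟩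
    · rw [dist_eq_norm, dist_eq_norm, ← ContinuousLinearMap.comp_sub]
      exact (ContinuousLinearMap.opNorm_comp_le _ _).trans (by gcongr; exact hAK t ht)
    · have hQ2 : ‖Q‖ ≤ 2 := by
        calc ‖Q‖ ≤ ‖ContinuousLinearMap.id ℝ E‖ + 1 := norm_le_norm_add_const_of_dist_le hQ
          _ ≤ 2 := by linarith [ContinuousLinearMap.norm_id_le (𝕜 := ℝ) (E := E)]
      calc ‖(A t).comp Q‖ ≤ ‖A t‖ * ‖Q‖ := ContinuousLinearMap.opNorm_comp_le _ _
        _ ≤ K * 2 := mul_le_mul (hAK t ht) hQ2 (norm_nonneg _) K.2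
        _ = ((2 * K : ℝ≥0) : ℝ) := by push_cast; ring
    · simpa [hT] using hKT
  exact hPL.exists_eq_forall_mem_Icc_hasDerivWithinAt₀

structure IsGlobalFlow (u : E → E) (Φ : ℝ → E → E) : Prop where
  zero : ∀ x, Φ 0 x = x
  hasDerivAt : ∀ x t, HasDerivAt (fun s => Φ s x) (u (Φ t x)) t
  add : ∀ s t x, Φ (s + t) x = Φ s (Φ t x)

namespace IsGlobalFlow

variable {u : E → E} {Φ : ℝ → E → E} {K C : ℝ≥0} {M : ℝ}

theorem continuous_apply (hΦ : IsGlobalFlow u Φ) (x : E) : Continuous fun t => Φ t x :=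
  continuous_iff_continuousAt.2 fun t => (hΦ.hasDerivAt x t).continuousAt

theorem reverse (hΦ : IsGlobalFlow u Φ) : IsGlobalFlow (fun x => -u x) (fun t => Φ (-t)) where
  zero x := by simpa using hΦ.zero x
  hasDerivAt x t := by
    simpa [Function.comp_def] using (hΦ.hasDerivAt x (-t)).scomp t (hasDerivAt_neg t)
  add s t x := by simp only [neg_add, hΦ.add]

theorem dist_le (hΦ : IsGlobalFlow u Φ) (hu : LipschitzWith K u) {t : ℝ}
    (ht : 0 ≤ t) (x y : E) : dist (Φ t x) (Φ t y) ≤ dist x y * Real.exp (K * t) := by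
  have hmem : t ∈ Icc 0 t := right_mem_Icc.2 ht
  simpa [hΦ.zero] using dist_le_of_trajectories_ODE (v := fun _ => u) (fun _ => hu)
    (hΦ.continuous_apply x).continuousOn (fun r _ => (hΦ.hasDerivAt x r).hasDerivWithinAt)
    (hΦ.continuous_apply y).continuousOn (fun r _ => (hΦ.hasDerivAt y r).hasDerivWithinAt)
    le_rfl t hmem

theorem norm_sub_le (hΦ : IsGlobalFlow u Φ) (hM : ∀ z, ‖u z‖ ≤ M) (t : ℝ) (x : E) :
    ‖Φ t x - x‖ ≤ M * |t| := by
  simpa [hΦ.zero] using (convex_uIcc 0 t).norm_image_sub_le_of_norm_hasDerivWithin_le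
    (fun r _ => (hΦ.hasDerivAt x r).hasDerivWithinAt) (fun r _ => hM _) left_mem_uIcc
    right_mem_uIcc

theorem hasFDerivAt_of_variational (hΦ : IsGlobalFlow u Φ) (hu : Differentiable ℝ u)
    (hK : ∀ z, ‖fderiv ℝ u z‖ ≤ K) (hC : LipschitzWith C (fderiv ℝ u)) {T : ℝ} (hT : 0 ≤ T)
    {x : E} {Q : ℝ → E →L[ℝ] E} (hQ0 : Q 0 = ContinuousLinearMap.id ℝ E)
    (hQ : ∀ t ∈ Icc 0 T, HasDerivWithinAt Q ((fderiv ℝ u (Φ t x)).comp (Q t)) (Icc 0 T) t) :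
    HasFDerivAt (Φ T) (Q T) x := by
  refine hasFDerivAt_of_norm_sub_sub_le_sq (gronwallBound 0 K (C * Real.exp (K * T) ^ 2) T)
    fun y => ?_
  have hLip : LipschitzWith K u := lipschitzWith_of_nnnorm_fderiv_le hu fun z => by
    rw [← NNReal.coe_le_coe, coe_nnnorm]; exact hK z
  set e : ℝ → E := fun r => Φ r y - Φ r x - Q r (y - x)
  set e' : ℝ → E := fun r => u (Φ r y) - u (Φ r x) - fderiv ℝ u (Φ r x) (Q r (y - x))
  have hQc : ContinuousOn Q (Icc 0 T) := fun r hr => (hQ r hr).continuousWithinAt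
  have he_cont : ContinuousOn e (Icc 0 T) :=
    ((hΦ.continuous_apply y).continuousOn.sub (hΦ.continuous_apply x).continuousOn).sub
      (hQc.clm_apply continuousOn_const)
  have he_deriv : ∀ r ∈ Ico 0 T, HasDerivWithinAt e (e' r) (Ici r) r := by
    intro r hr
    have hQr := ((hQ r (Ico_subset_Icc_self hr)).mono_of_mem_nhdsWithin
      (Icc_mem_nhdsGE_of_mem hr)).clm_apply (hasDerivWithinAt_const r _ (y - x))
    simp only [ContinuousLinearMap.comp_apply, map_zero, add_zero] at hQr
    exact ((hΦ.hasDerivAt y r).hasDerivWithinAt.sub (hΦ.hasDerivAt x r).hasDerivWithinAt).sub hQr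
  have he_bound : ∀ r ∈ Ico 0 T,
      ‖e' r‖ ≤ K * ‖e r‖ + ‖y - x‖ ^ 2 * (C * Real.exp (K * T) ^ 2) := by
    intro r hr
    set A := fderiv ℝ u (Φ r x)
    have hsplit : e' r = (u (Φ r y) - u (Φ r x) - A (Φ r y - Φ r x)) + A (e r) := by
      simp only [e', e, map_sub]; abel
    have hd : ‖Φ r y - Φ r x‖ ≤ ‖y - x‖ * Real.exp (K * T) := by
      have := hΦ.dist_le hLip hr.1 y x
      rw [dist_eq_norm, dist_eq_norm] at this
      exact this.trans (by gcongr; exact hr.2.le)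
    have htaylor := norm_sub_sub_fderiv_le_of_lipschitzWith hu hC (Φ r x) (Φ r y)
    calc ‖e' r‖ ≤ ‖u (Φ r y) - u (Φ r x) - A (Φ r y - Φ r x)‖ + ‖A (e r)‖ := by
          rw [hsplit]; exact norm_add_le _ _
      _ ≤ C * (‖y - x‖ * Real.exp (K * T)) ^ 2 + K * ‖e r‖ :=
          add_le_add (htaylor.trans (by gcongr)) ((A.le_opNorm _).trans (by gcongr; exact hK _))
      _ = K * ‖e r‖ + ‖y - x‖ ^ 2 * (C * Real.exp (K * T) ^ 2) := by ring
  have := norm_le_gronwallBound_of_norm_deriv_right_le (δ := 0) he_cont he_deriv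
    (by simp [e, hΦ.zero, hQ0]) he_bound T (right_mem_Icc.2 hT)
  rw [sub_zero, gronwallBound_zero_mul] at this
  exact this.trans_eq (mul_comm _ _)

theorem differentiableAt_of_nonneg_of_mul_le_one [CompleteSpace E] (hΦ : IsGlobalFlow u Φ)
    (hu : Differentiable ℝ u)
    (hK : ∀ z, ‖fderiv ℝ u z‖ ≤ K) (hC : LipschitzWith C (fderiv ℝ u)) {t : ℝ} (ht : 0 ≤ t)
    (htK : 2 * K * t ≤ 1) (x : E) : DifferentiableAt ℝ (Φ t) x := by
  obtain ⟨Q, hQ0, hQ⟩ := exists_hasDerivWithinAt_clm_comp ht htK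
    (hC.continuous.comp (hΦ.continuous_apply x)).continuousOn fun r _ => hK (Φ r x)
  exact (hΦ.hasFDerivAt_of_variational hu hK hC ht hQ0 hQ).differentiableAt

theorem differentiableAt_of_mul_abs_le_one [CompleteSpace E] (hΦ : IsGlobalFlow u Φ)
    (hu : Differentiable ℝ u)
    (hK : ∀ z, ‖fderiv ℝ u z‖ ≤ K) (hC : LipschitzWith C (fderiv ℝ u)) {t : ℝ}
    (htK : 2 * K * |t| ≤ 1) (x : E) : DifferentiableAt ℝ (Φ t) x := by
  rcases le_total 0 t with ht | ht
  · exact hΦ.differentiableAt_of_nonneg_of_mul_le_one hu hK hC ht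
      (by rwa [abs_of_nonneg ht] at htK) x
  · have hK' : ∀ z, ‖fderiv ℝ (fun y => -u y) z‖ ≤ K := fun z => by
      rw [fderiv_fun_neg, norm_neg]; exact hK z
    have hC' : LipschitzWith C (fderiv ℝ fun y => -u y) := by
      have hneg : (fderiv ℝ fun y => -u y) = fun z => -fderiv ℝ u z :=
        funext fun z => fderiv_fun_neg
      rw [hneg]
      exact hC.neg
    simpa using hΦ.reverse.differentiableAt_of_nonneg_of_mul_le_one hu.neg hK' hC' (neg_nonneg.2 ht)
      (by rwa [abs_of_nonpos ht] at htK) x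

theorem differentiableAt [CompleteSpace E] (hΦ : IsGlobalFlow u Φ) (hu : Differentiable ℝ u)
    (hK : ∀ z, ‖fderiv ℝ u z‖ ≤ K) (hC : LipschitzWith C (fderiv ℝ u)) (t : ℝ) (x : E) :
    DifferentiableAt ℝ (Φ t) x := by
  obtain ⟨n, hn⟩ := exists_nat_ge (2 * K * |t|)
  set τ := t / (n + 1)
  have hτ : 2 * K * |τ| ≤ 1 := by
    rw [abs_div, abs_of_pos (by positivity : (0 : ℝ) < n + 1), mul_div_assoc',
      div_le_one (by positivity)]
    linarith
  have hiter : ∀ k : ℕ, ∀ y, DifferentiableAt ℝ (Φ (k * τ)) y := by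
    intro k
    induction k with
    | zero => simp [funext hΦ.zero]
    | succ k ih =>
      intro y
      have hsplit : Φ ((k + 1 : ℕ) * τ) = Φ τ ∘ Φ (k * τ) := by
        funext z; rw [Function.comp_apply, ← hΦ.add]; push_cast; ring_nf
      rw [hsplit]
      exact (hΦ.differentiableAt_of_mul_abs_le_one hu hK hC hτ _).comp y (ih y)
  simpa [τ, mul_div_cancel₀ t (by positivity : (n + 1 : ℝ) ≠ 0)] using hiter (n + 1) x

theorem fderiv_apply_self (hΦ : IsGlobalFlow u Φ) {t : ℝ} {x : E}
    (hd : DifferentiableAt ℝ (Φ t) x) : fderiv ℝ (Φ t) x (u x) = u (Φ t x) := by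
  have hcomp : HasDerivAt (fun τ => Φ t (Φ τ x)) (fderiv ℝ (Φ t) x (u x)) 0 := by
    have hx := hΦ.hasDerivAt x 0
    rw [hΦ.zero] at hx
    have hd' : HasFDerivAt (Φ t) (fderiv ℝ (Φ t) x) (Φ 0 x) := by
      rw [hΦ.zero]; exact hd.hasFDerivAt
    exact hd'.comp_hasDerivAt 0 hx
  have hshift : HasDerivAt (fun τ => Φ (t + τ) x) (u (Φ t x)) 0 := by
    simpa [Function.comp_def] using
      (hΦ.hasDerivAt x (t + 0)).scomp 0 ((hasDerivAt_id (0 : ℝ)).const_add t)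
  simp only [hΦ.add] at hshift
  exact hcomp.unique hshift

theorem hasFDerivAt_uncurry_zero (hΦ : IsGlobalFlow u Φ) (hM : ∀ z, ‖u z‖ ≤ M)
    {y₀ : E} (hu : ContinuousAt u y₀) :
    HasFDerivAt (fun p : ℝ × E => Φ p.1 p.2)
      ((ContinuousLinearMap.fst ℝ ℝ E).smulRight (u y₀) + ContinuousLinearMap.snd ℝ ℝ E)
      (0, y₀) := by
  refine .of_isLittleO <| isLittleO_iff.2 fun ε hε => ?_
  obtain ⟨δ, hδ, hball⟩ := Metric.continuousAt_iff.1 hu ε hε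
  have hM0 : 0 ≤ M := (norm_nonneg _).trans (hM y₀)
  filter_upwards [Metric.ball_mem_nhds ((0 : ℝ), y₀) (by positivity : 0 < δ / (M + 1))]
    with ⟨α, y⟩ hp
  rw [Metric.mem_ball, dist_eq_norm] at hp
  have hα : ‖α‖ ≤ ‖(α, y) - (0, y₀)‖ := by simp
  have hy : ‖y - y₀‖ ≤ ‖(α, y) - (0, y₀)‖ := by simp
  have hnear : ∀ r ∈ uIcc 0 α, ‖u (Φ r y) - u y₀‖ ≤ ε := by
    intro r hr
    have hr' : |r| ≤ |α| := by simpa using abs_sub_left_of_mem_uIcc hr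
    rw [← dist_eq_norm]
    refine (hball ?_).le
    rw [dist_eq_norm]
    calc ‖Φ r y - y₀‖ ≤ ‖Φ r y - y‖ + ‖y - y₀‖ := norm_sub_le_norm_sub_add_norm_sub _ _ _
      _ ≤ M * ‖α‖ + ‖y - y₀‖ := by
          gcongr; exact (hΦ.norm_sub_le hM r y).trans (by gcongr; simpa using hr')
      _ ≤ (M + 1) * ‖(α, y) - (0, y₀)‖ := by nlinarith
      _ < δ := by rwa [lt_div_iff₀' (by positivity)] at hp
  have hmvt := (convex_uIcc 0 α).norm_image_sub_le_of_norm_hasDerivWithin_le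
    (f := fun r => Φ r y - r • u y₀) (fun r _ =>
      ((hΦ.hasDerivAt y r).sub ((hasDerivAt_id r).smul_const (u y₀))).hasDerivWithinAt.congr_deriv
        (by simp)) hnear left_mem_uIcc right_mem_uIcc
  calc ‖Φ α y - Φ 0 y₀ - ((ContinuousLinearMap.fst ℝ ℝ E).smulRight (u y₀) +
        ContinuousLinearMap.snd ℝ ℝ E) ((α, y) - (0, y₀))‖
      = ‖(Φ α y - α • u y₀) - (Φ 0 y - (0 : ℝ) • u y₀)‖ := by
        simp only [hΦ.zero, zero_smul, sub_zero, add_apply,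
          ContinuousLinearMap.smulRight_apply, ContinuousLinearMap.coe_fst',
          ContinuousLinearMap.coe_snd', Prod.fst_sub, Prod.snd_sub]
        congr 1; abel
    _ ≤ ε * ‖α - 0‖ := hmvt
    _ ≤ ε * ‖(α, y) - (0, y₀)‖ := by rw [sub_zero]; gcongr

theorem hasFDerivAt_uncurry (hΦ : IsGlobalFlow u Φ) (hM : ∀ z, ‖u z‖ ≤ M) {t₀ : ℝ}
    {x₀ : E} (hu : ContinuousAt u (Φ t₀ x₀)) (hd : DifferentiableAt ℝ (Φ t₀) x₀) :
    HasFDerivAt (fun p : ℝ × E => Φ p.1 p.2)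
      ((fderiv ℝ (Φ t₀) x₀).comp
        ((ContinuousLinearMap.fst ℝ ℝ E).smulRight (u x₀) + ContinuousLinearMap.snd ℝ ℝ E))
      (t₀, x₀) := by
  have hshift : (fun p : ℝ × E => Φ p.1 p.2) =
      (fun q : ℝ × E => Φ q.1 q.2) ∘ fun p : ℝ × E => (p.1 - t₀, Φ t₀ p.2) := by
    funext p
    simp only [Function.comp_apply, ← hΦ.add, sub_add_cancel]
  have hinner : HasFDerivAt (fun p : ℝ × E => (p.1 - t₀, Φ t₀ p.2))
      ((ContinuousLinearMap.fst ℝ ℝ E).prod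
        ((fderiv ℝ (Φ t₀) x₀).comp (ContinuousLinearMap.snd ℝ ℝ E))) (t₀, x₀) :=
    (hasFDerivAt_fst.sub_const t₀).prodMk (hd.hasFDerivAt.comp (t₀, x₀) hasFDerivAt_snd)
  have houter := hΦ.hasFDerivAt_uncurry_zero hM hu
  rw [← sub_self t₀] at houter
  rw [hshift]
  refine (houter.comp (t₀, x₀) hinner).congr_fderiv ?_
  ext p <;> simp [hΦ.fderiv_apply_self hd]

end IsGlobalFlow

end

theorem PeriodicR2.fderiv {F : Type*} [NormedAddCommGroup F] [NormedSpace ℝ F] {f : R2 → F}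
    (hf : PeriodicR2 f) : PeriodicR2 (fderiv ℝ f) := fun m x => by
  rw [← fderiv_comp_add_right, funext (hf m)]

theorem PeriodicR2.exists_norm_le {F : Type*} [NormedAddCommGroup F] {f : R2 → F}
    (hf : PeriodicR2 f) (hc : Continuous f) : ∃ M : ℝ≥0, ∀ x, ‖f x‖ ≤ M := by
  have hcpt : IsCompact (WithLp.toLp 2 '' Icc (0 : Fin 2 → ℝ) 1) :=
    isCompact_Icc.image (PiLp.continuous_toLp 2 _)
  obtain ⟨M, hM⟩ := hcpt.exists_bound_of_continuousOn hc.continuousOn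
  refine ⟨M.toNNReal, fun x => ?_⟩
  have hx : x = WithLp.toLp 2 (fun i => Int.fract (x i)) + intVec fun i => ⌊x i⌋ := by
    ext i; simp [intVec, Int.fract_add_floor]
  rw [hx, hf]
  exact (hM _ ⟨_, ⟨fun i => Int.fract_nonneg _, fun i => (Int.fract_lt_one _).le⟩, rfl⟩).trans
    (Real.le_coe_toNNReal M)

namespace SmoothVF

variable {u : R2 → R2}

theorem exists_norm_le (hu : SmoothVF u) : ∃ M : ℝ≥0, ∀ x, ‖u x‖ ≤ M :=
  hu.2.exists_norm_le hu.1.continuous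

theorem contDiff_one_fderiv (hu : SmoothVF u) : ContDiff ℝ 1 (fderiv ℝ u) :=
  hu.1.fderiv_right (by norm_cast)

theorem exists_norm_fderiv_le (hu : SmoothVF u) : ∃ K : ℝ≥0, ∀ x, ‖fderiv ℝ u x‖ ≤ K :=
  hu.2.fderiv.exists_norm_le hu.contDiff_one_fderiv.continuous

theorem exists_lipschitzWith_fderiv (hu : SmoothVF u) :
    ∃ C : ℝ≥0, LipschitzWith C (fderiv ℝ u) := by
  obtain ⟨C, hC⟩ := hu.2.fderiv.fderiv.exists_norm_le
    (hu.contDiff_one_fderiv.continuous_fderiv one_ne_zero)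
  exact ⟨C, lipschitzWith_of_nnnorm_fderiv_le (hu.contDiff_one_fderiv.differentiable one_ne_zero)
    fun x => by rw [← NNReal.coe_le_coe, coe_nnnorm]; exact hC x⟩

end SmoothVF

namespace IsFlowOf

variable {u : R2 → R2} {Φ : ℝ → R2 → R2}

theorem isGlobalFlow (hΦ : IsFlowOf u Φ) : IsGlobalFlow u Φ := ⟨hΦ.1, hΦ.2.1, hΦ.2.2.1⟩

theorem differentiableAt (hΦ : IsFlowOf u Φ) (hu : SmoothVF u) (t : ℝ) (x : R2) :
    DifferentiableAt ℝ (Φ t) x := by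
  obtain ⟨K, hK⟩ := hu.exists_norm_fderiv_le
  obtain ⟨C, hC⟩ := hu.exists_lipschitzWith_fderiv
  exact hΦ.isGlobalFlow.differentiableAt (hu.1.differentiable (by simp)) hK hC t x

theorem hasFDerivAt_uncurry (hΦ : IsFlowOf u Φ) (hu : SmoothVF u) (t₀ : ℝ) (x₀ : R2) :
    HasFDerivAt (fun p : ℝ × R2 => Φ p.1 p.2)
      ((fderiv ℝ (Φ t₀) x₀).comp
        ((ContinuousLinearMap.fst ℝ ℝ R2).smulRight (u x₀) + ContinuousLinearMap.snd ℝ ℝ R2))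
      (t₀, x₀) := by
  obtain ⟨M, hM⟩ := hu.exists_norm_le
  exact hΦ.isGlobalFlow.hasFDerivAt_uncurry hM hu.1.continuous.continuousAt
    (hΦ.differentiableAt hu t₀ x₀)

end IsFlowOf

theorem Umat_mulVec (u₀ u₁ : R2 → R2) (z : R2) (w : Fin 2 → ℝ) :
    (Umat u₀ u₁ z).mulVec w = WithLp.ofLp (w 0 • u₁ z + w 1 • u₀ z) := by
  ext i; simp [Umat, Matrix.mulVec, dotProduct, Fin.sum_univ_two, mul_comm]

theorem CondB.isUnit_det_Umat {u₀ u₁ : R2 → R2} (hB : CondB u₀ u₁) (z : R2) :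
    IsUnit (Umat u₀ u₁ z).det := by
  rw [← Matrix.isUnit_iff_isUnit_det, ← Matrix.mulVec_surjective_iff_isUnit]
  intro v
  have hv : WithLp.toLp 2 v ∈ Submodule.span ℝ {u₀ z, u₁ z} := hB z ▸ Submodule.mem_top
  obtain ⟨a, b, hab⟩ := Submodule.mem_span_pair.1 hv
  refine ⟨![b, a], ?_⟩
  rw [Umat_mulVec]
  simp [add_comm, hab]

theorem EuclideanSpace.matrix_mulVec_ofLp {n : ℕ}
    (L : EuclideanSpace ℝ (Fin n) →L[ℝ] EuclideanSpace ℝ (Fin n)) (ξ : EuclideanSpace ℝ (Fin n)) :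
    (Matrix.of fun k l => L (EuclideanSpace.single l 1) k).mulVec (WithLp.ofLp ξ) =
      WithLp.ofLp (L ξ) := by
  ext k
  conv_rhs => rw [← (EuclideanSpace.basisFun (Fin n) ℝ).sum_repr ξ]
  simp [Matrix.mulVec, dotProduct, map_sum, mul_comm]

section Psi

variable {u₀ u₁ : R2 → R2} {Φ₀ Φ₁ : ℝ → R2 → R2}

theorem Fmat_apply_eq_neg_tauVec {t : ℝ} {x : R2}
    (hdet : IsUnit (Umat u₀ u₁ (Psi Φ₀ t x)).det) (ξ : R2) :
    Fmat Φ₀ t x ξ = -((tauVec u₀ u₁ Φ₀ t x ξ).1 • u₁ (Psi Φ₀ t x) +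
      (tauVec u₀ u₁ Φ₀ t x ξ).2 • u₀ (Psi Φ₀ t x)) := by
  have hUv : (Umat u₀ u₁ (Psi Φ₀ t x)).mulVec ((tauM u₀ u₁ Φ₀ t x).mulVec (WithLp.ofLp ξ)) =
      -WithLp.ofLp (Fmat Φ₀ t x ξ) := by
    rw [tauM, Matrix.neg_mulVec, Matrix.mulVec_neg, Matrix.mulVec_mulVec, ← Matrix.mul_assoc,
      Matrix.mul_nonsing_inv _ hdet, Matrix.one_mul, EuclideanSpace.matrix_mulVec_ofLp]
  rw [Umat_mulVec] at hUv
  ext i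
  have := congrFun hUv i
  simp only [tauVec, PiLp.add_apply, PiLp.smul_apply, PiLp.neg_apply, smul_eq_mul,
    Pi.neg_apply] at this ⊢
  linarith

theorem hasFDerivAt_Psi2 (hΦ₀ : IsFlowOf u₀ Φ₀) (hu₀ : SmoothVF u₀) (hΦ₁ : IsFlowOf u₁ Φ₁)
    (hu₁ : SmoothVF u₁) (s t : ℝ) (x : R2) :
    HasFDerivAt (Psi2 Φ₀ Φ₁ s t) ((Fmat Φ₁ s (Psi Φ₀ t x)).comp (Fmat Φ₀ t x)) x :=
  (hΦ₁.differentiableAt hu₁ (-s) _).hasFDerivAt.comp x (hΦ₀.differentiableAt hu₀ (-t) x).hasFDerivAt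

theorem hasFDerivAt_Psi2_time (hΦ₀ : IsFlowOf u₀ Φ₀) (hΦ₁ : IsFlowOf u₁ Φ₁) (hu₁ : SmoothVF u₁)
    (s t : ℝ) (x : R2) :
    HasFDerivAt (fun p : ℝ × ℝ => Psi2 Φ₀ Φ₁ p.1 p.2 x)
      (-(Fmat Φ₁ s (Psi Φ₀ t x)).comp
        ((ContinuousLinearMap.fst ℝ ℝ ℝ).smulRight (u₁ (Psi Φ₀ t x)) +
          (ContinuousLinearMap.snd ℝ ℝ ℝ).smulRight (u₀ (Psi Φ₀ t x)))) (s, t) := by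
  have hcurve : HasFDerivAt (fun p : ℝ × ℝ => Φ₀ (-p.2) x)
      (-(ContinuousLinearMap.snd ℝ ℝ ℝ).smulRight (u₀ (Psi Φ₀ t x))) (s, t) := by
    have hneg : HasFDerivAt (fun p : ℝ × ℝ => -p.2) (-ContinuousLinearMap.snd ℝ ℝ ℝ) (s, t) :=
      hasFDerivAt_snd.neg
    refine ((hΦ₀.2.1 x (-t)).hasFDerivAt.comp (s, t) hneg).congr_fderiv ?_
    ext p <;> simp [Psi]
  have hPsi : Psi Φ₁ s = Φ₁ (-s) := rfl
  refine ((hΦ₁.hasFDerivAt_uncurry hu₁ (-s) _).comp (s, t)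
    (hasFDerivAt_fst.neg.prodMk hcurve)).congr_fderiv ?_
  ext p <;> simp [Fmat, hPsi, Psi]

end Psi

theorem spatial_to_temporal_derivative_transfer
    (u₀ u₁ : R2 → R2) (Φ₀ Φ₁ : ℝ → R2 → R2)
    (hu₀ : SmoothVF u₀) (hu₁ : SmoothVF u₁)
    (hΦ₀ : IsFlowOf u₀ Φ₀) (hΦ₁ : IsFlowOf u₁ Φ₁)
    (hB : CondB u₀ u₁) :
    ∀ h : R2 → ℝ, ContDiff ℝ 1 h → PeriodicR2 h →
      ∀ (x : R2) (s t : ℝ), 0 ≤ s → 0 ≤ t → ∀ ξ : R2,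
        fderiv ℝ (fun y => h (Psi2 Φ₀ Φ₁ s t y)) x ξ =
          fderiv ℝ (fun p : ℝ × ℝ => h (Psi2 Φ₀ Φ₁ p.1 p.2 x)) (s, t)
            (tauVec u₀ u₁ Φ₀ t x ξ) := by
  intro h hh _ x s t _ _ ξ
  have hh' := (hh.differentiable one_ne_zero (Psi2 Φ₀ Φ₁ s t x)).hasFDerivAt
  have hspace : HasFDerivAt (fun y => h (Psi2 Φ₀ Φ₁ s t y)) _ x :=
    hh'.comp x (hasFDerivAt_Psi2 hΦ₀ hu₀ hΦ₁ hu₁ s t x)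
  have htime : HasFDerivAt (fun p : ℝ × ℝ => h (Psi2 Φ₀ Φ₁ p.1 p.2 x)) _ (s, t) :=
    hh'.comp (s, t) (hasFDerivAt_Psi2_time hΦ₀ hΦ₁ hu₁ s t x)
  rw [hspace.fderiv, htime.fderiv]
  simp [Fmat_apply_eq_neg_tauVec (hB.isUnit_det_Umat _) ξ]
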